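/- arXiv:2201.02346 — 3 statements merged into one kernel-verified Lean document; each statement's English description precedes it below -/
import Mathlib

section
/- Let S be a semigroup. If the intersection ideal graph Γ(S) is disconnected, then Γ(S) is a null graph, i.e., no two distinct nontrivial left ideals of S are adjacent in Γ(S). -/
/-- `I` is a left ideal of the semigroup `S`: a nonempty subset closed under
left multiplication by arbitrary elements of `S`. -/
def IsLeftIdeal (S : Type*) [Semigroup S] (I : Set S) : Prop :=
  I.Nonempty ∧ ∀ s : S, ∀ x ∈ I, s * x ∈ I

/-- `I` is a nontrivial left ideal of `S`: a left ideal with `I ≠ S`. -/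
def IsNontrivialLeftIdeal (S : Type*) [Semigroup S] (I : Set S) : Prop :=
  IsLeftIdeal S I ∧ I ≠ Set.univ

/-- `I` is a minimal left ideal of `S`: a nontrivial left ideal properly
containing no left ideal of `S`. -/
def IsMinimalLeftIdeal (S : Type*) [Semigroup S] (I : Set S) : Prop :=
  IsNontrivialLeftIdeal S I ∧ ∀ J : Set S, IsLeftIdeal S J → ¬ J ⊂ I

/-- `I` is a maximal left ideal of `S`: a nontrivial left ideal not properly
contained in any nontrivial left ideal of `S`. -/
def IsMaximalLeftIdeal (S : Type*) [Semigroup S] (I : Set S) : Prop :=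
  IsNontrivialLeftIdeal S I ∧ ∀ J : Set S, IsNontrivialLeftIdeal S J → ¬ I ⊂ J

/-- The intersection ideal graph `Γ(S)`: vertices are the nontrivial left ideals of `S`,
two distinct vertices being adjacent iff their intersection is nonempty. -/
def idealGraph (S : Type*) [Semigroup S] :
    SimpleGraph {I : Set S // IsNontrivialLeftIdeal S I} where
  Adj I J := I ≠ J ∧ (I.1 ∩ J.1).Nonempty
  symm := ⟨by
    rintro I J ⟨h1, h2⟩
    exact ⟨h1.symm, by rwa [Set.inter_comm]⟩⟩
  loopless := ⟨by rintro I ⟨h1, -⟩; exact h1 rfl⟩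

/-! If two nontrivial left ideals `I`, `J` lie in different components of `Γ(S)`, they are
disjoint, and `I ∪ J = S`, since otherwise `I ∪ J` would be a vertex meeting both. So a vertex
outside the component of an edge `uv` is the complement of both `u` and `v`, forcing `u = v`. -/

theorem IsLeftIdeal.union {S : Type*} [Semigroup S] {I J : Set S}
    (hI : IsLeftIdeal S I) (hJ : IsLeftIdeal S J) : IsLeftIdeal S (I ∪ J) :=
  ⟨hI.1.mono Set.subset_union_left, fun s x hx => hx.imp (hI.2 s x) (hJ.2 s x)⟩

namespace idealGraph

variable {S : Type*} [Semigroup S] {I J : {I : Set S // IsNontrivialLeftIdeal S I}}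

theorem reachable_of_inter_nonempty (h : (I.1 ∩ J.1).Nonempty) :
    (idealGraph S).Reachable I J := by
  by_cases hIJ : I = J
  · exact hIJ ▸ SimpleGraph.Reachable.refl I
  · exact SimpleGraph.Adj.reachable ⟨hIJ, h⟩

theorem isCompl_of_not_reachable (h : ¬ (idealGraph S).Reachable I J) :
    IsCompl I.1 J.1 := by
  refine ⟨Set.disjoint_iff_inter_eq_empty.2 ?_, codisjoint_iff.2 ?_⟩
  · by_contra hmeet
    exact h (reachable_of_inter_nonempty (Set.nonempty_iff_ne_empty.2 hmeet))
  · by_contra hproper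
    let K : {I : Set S // IsNontrivialLeftIdeal S I} := ⟨I.1 ∪ J.1, I.2.1.union J.2.1, hproper⟩
    obtain ⟨x, hx⟩ := I.2.1.1
    obtain ⟨y, hy⟩ := J.2.1.1
    have hIK : (idealGraph S).Reachable I K := reachable_of_inter_nonempty ⟨x, hx, Or.inl hx⟩
    have hKJ : (idealGraph S).Reachable K J := reachable_of_inter_nonempty ⟨y, Or.inr hy, hy⟩
    exact h (hIK.trans hKJ)

end idealGraph

theorem idealGraph_disconnected_null_general (S : Type*) [Semigroup S]
    (h2 : ¬ (idealGraph S).Connected) :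
    ∀ u v : {I : Set S // IsNontrivialLeftIdeal S I}, ¬ (idealGraph S).Adj u v := by
  rintro u v ⟨huv, hmeet⟩
  refine h2 ((SimpleGraph.connected_iff_exists_forall_reachable _).2 ⟨u, fun w => ?_⟩)
  by_contra huw
  have hvw : ¬ (idealGraph S).Reachable v w := fun hvw =>
    huw ((idealGraph.reachable_of_inter_nonempty hmeet).trans hvw)
  exact huv (Subtype.ext ((idealGraph.isCompl_of_not_reachable huw).left_unique
    (idealGraph.isCompl_of_not_reachable hvw)))

/-- If `Γ(S)` is disconnected then it is a null graph. -/
theorem idealGraph_disconnected_null (S : Type*) [Semigroup S]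
    (h1 : Nonempty {I : Set S // IsNontrivialLeftIdeal S I})
    (h2 : ¬ (idealGraph S).Connected) :
    ∀ u v : {I : Set S // IsNontrivialLeftIdeal S I}, ¬ (idealGraph S).Adj u v :=
  idealGraph_disconnected_null_general S h2
end

section
/- Let S be a semigroup having at least one minimal left ideal, and suppose the intersection ideal graph Γ(S) is connected. Then the diameter of Γ(S) equals 2 if and only if S has at least two minimal left ideals. -/
/-!
Minimal left ideals are pairwise disjoint, and if `M` is one of them then `M * a` is a minimal
left ideal inside every left ideal containing `a`. Hence, when there is a unique minimal left
ideal, every vertex of `Γ(S)` contains it and `Γ(S)` is complete. Otherwise two minimal left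
ideals are disjoint vertices, so the diameter is at least `2`; and it is at most `2`, since two
disjoint vertices `A ⊇ N_A`, `B ⊇ N_B` are both adjacent to `N_A ∪ N_B` unless
`N_A ∪ N_B = S`, in which case `A = N_A` and any neighbour of `A` (given by connectedness)
contains `A` properly and so meets `B`.
-/

namespace SimpleGraph

variable {V : Type*} {G : SimpleGraph V}

lemma ediam_le_one_of_forall_adj (h : ∀ u v, u ≠ v → G.Adj u v) : G.ediam ≤ 1 :=
  ediam_le_of_edist_le fun u v ↦
    edist_le_one_iff_adj_or_eq.mpr <| (eq_or_ne u v).symm.imp_left (h u v)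

lemma ediam_le_two_of_commonNeighbors_nonempty
    (h : ∀ u v, u ≠ v → ¬G.Adj u v → (G.commonNeighbors u v).Nonempty) : G.ediam ≤ 2 := by
  refine ediam_le_of_edist_le fun u v ↦ ?_
  by_cases hle : G.edist u v ≤ 1
  · exact hle.trans one_le_two
  rw [edist_le_one_iff_adj_or_eq, not_or] at hle
  exact (edist_eq_two_iff.mpr ⟨hle.2, hle.1, h u v hle.2 hle.1⟩).le

end SimpleGraph

section Semigroup

variable {S : Type*} [Semigroup S]

namespace IsLeftIdeal

lemma inter {I J : Set S} (hI : IsLeftIdeal S I) (hJ : IsLeftIdeal S J)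
    (h : (I ∩ J).Nonempty) : IsLeftIdeal S (I ∩ J) :=
  ⟨h, fun s x hx ↦ ⟨hI.2 s x hx.1, hJ.2 s x hx.2⟩⟩

lemma union_s7 {I J : Set S} (hI : IsLeftIdeal S I) (hJ : IsLeftIdeal S J) :
    IsLeftIdeal S (I ∪ J) :=
  ⟨hI.1.mono Set.subset_union_left, fun s x hx ↦ hx.imp (hI.2 s x) (hJ.2 s x)⟩

lemma image_mul_right {M : Set S} (hM : IsLeftIdeal S M) (a : S) :
    IsLeftIdeal S ((· * a) '' M) := by
  refine ⟨hM.1.image _, ?_⟩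
  rintro s _ ⟨m, hm, rfl⟩
  exact ⟨s * m, hM.2 s m hm, mul_assoc s m a⟩

end IsLeftIdeal

namespace IsMinimalLeftIdeal

variable {M N : Set S}

lemma eq_of_subset (hM : IsMinimalLeftIdeal S M) {J : Set S} (hJ : IsLeftIdeal S J)
    (hJM : J ⊆ M) : J = M :=
  hJM.eq_or_ssubset.resolve_right (hM.2 J hJ)

lemma subset_of_inter_nonempty (hM : IsMinimalLeftIdeal S M) {L : Set S}
    (hL : IsLeftIdeal S L) (h : (M ∩ L).Nonempty) : M ⊆ L :=
  (hM.eq_of_subset (hM.1.1.inter hL h) Set.inter_subset_left).symm ▸ Set.inter_subset_right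

lemma eq_of_inter_nonempty (hM : IsMinimalLeftIdeal S M) (hN : IsMinimalLeftIdeal S N)
    (h : (M ∩ N).Nonempty) : M = N :=
  hN.eq_of_subset hM.1.1 (hM.subset_of_inter_nonempty hN.1.1 h)

/-- `{m ∈ M | m * a ∈ J}` is a left ideal inside `M`, hence all of `M`. -/
lemma image_mul_right_subset (hM : IsMinimalLeftIdeal S M) (a : S) {J : Set S}
    (hJ : IsLeftIdeal S J) (hJM : J ⊆ (· * a) '' M) : (· * a) '' M ⊆ J := by
  obtain ⟨j, hj⟩ := hJ.1
  obtain ⟨m₀, hm₀, rfl⟩ := hJM hj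
  have hK : IsLeftIdeal S {m ∈ M | m * a ∈ J} :=
    ⟨⟨m₀, hm₀, hj⟩, fun s m hm ↦ ⟨hM.1.1.2 s m hm.1, (mul_assoc s m a).symm ▸ hJ.2 s _ hm.2⟩⟩
  rintro _ ⟨m, hm, rfl⟩
  exact ((hM.eq_of_subset hK fun _ hx ↦ hx.1).symm ▸ hm : m ∈ {m ∈ M | m * a ∈ J}).2

lemma exists_subset (hM : IsMinimalLeftIdeal S M) {A : Set S}
    (hA : IsNontrivialLeftIdeal S A) : ∃ N, IsMinimalLeftIdeal S N ∧ N ⊆ A := by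
  obtain ⟨a, ha⟩ := hA.1.1
  have hsub : (· * a) '' M ⊆ A := by
    rintro _ ⟨m, -, rfl⟩
    exact hA.1.2 m a ha
  refine ⟨_, ⟨⟨hM.1.1.image_mul_right a, fun h ↦ hA.2 (Set.univ_subset_iff.mp (h ▸ hsub))⟩,
    fun J hJ hJM ↦ hJM.2 (hM.image_mul_right_subset a hJ hJM.1)⟩, hsub⟩

end IsMinimalLeftIdeal

lemma idealGraph_adj_of_not_subset {A C : {I : Set S // IsNontrivialLeftIdeal S I}}
    (h : (A.1 ∩ C.1).Nonempty) (hCA : ¬C.1 ⊆ A.1) : (idealGraph S).Adj A C :=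
  ⟨fun hAC ↦ hCA (hAC ▸ subset_rfl), h⟩

lemma idealGraph_commonNeighbors_nonempty (hmin : ∃ M : Set S, IsMinimalLeftIdeal S M)
    (hconn : (idealGraph S).Preconnected) {A B : {I : Set S // IsNontrivialLeftIdeal S I}}
    (hAB : A ≠ B) (hadj : ¬(idealGraph S).Adj A B) :
    ((idealGraph S).commonNeighbors A B).Nonempty := by
  have hdisj : ∀ x ∈ A.1, x ∉ B.1 := fun x hxA hxB ↦ hadj ⟨hAB, x, hxA, hxB⟩
  obtain ⟨M, hM⟩ := hmin
  obtain ⟨NA, hNA, hNAA⟩ := hM.exists_subset A.2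
  obtain ⟨NB, hNB, hNBB⟩ := hM.exists_subset B.2
  by_cases huniv : NA ∪ NB = Set.univ
  · have hANA : A.1 ⊆ NA := fun x hx ↦
      ((huniv ▸ Set.mem_univ x : x ∈ NA ∪ NB).resolve_right fun h ↦ hdisj x hx (hNBB h))
    have : Nontrivial {I : Set S // IsNontrivialLeftIdeal S I} := nontrivial_of_ne A B hAB
    obtain ⟨C, hAC⟩ := hconn.exists_adj_of_nontrivial A
    have hAC_sub : A.1 ⊆ C.1 := hANA.trans <|
      hNA.subset_of_inter_nonempty C.2.1 (hAC.2.mono (Set.inter_subset_inter_left _ hANA))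
    obtain ⟨x, hxC, hxA⟩ := Set.exists_of_ssubset
      (hAC_sub.ssubset_of_ne fun h ↦ hAC.1 (Subtype.ext h))
    have hxB : x ∈ B.1 :=
      hNBB ((huniv ▸ Set.mem_univ x : x ∈ NA ∪ NB).resolve_left fun h ↦ hxA (hNAA h))
    obtain ⟨a, ha⟩ := A.2.1.1
    exact ⟨C, hAC, idealGraph_adj_of_not_subset ⟨x, hxB, hxC⟩
      fun h ↦ hdisj a ha (h (hAC_sub ha))⟩
  · obtain ⟨a, ha⟩ := hNA.1.1.1
    obtain ⟨b, hb⟩ := hNB.1.1.1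
    refine ⟨⟨NA ∪ NB, hNA.1.1.union_s7 hNB.1.1, huniv⟩,
      idealGraph_adj_of_not_subset ⟨a, hNAA ha, .inl ha⟩ fun h ↦ hdisj b (h (.inr hb)) (hNBB hb),
      idealGraph_adj_of_not_subset ⟨b, hNBB hb, .inr hb⟩ fun h ↦ hdisj a (hNAA ha) (h (.inl ha))⟩

lemma idealGraph_ediam_le_two (hmin : ∃ M : Set S, IsMinimalLeftIdeal S M)
    (hconn : (idealGraph S).Preconnected) : (idealGraph S).ediam ≤ 2 :=
  SimpleGraph.ediam_le_two_of_commonNeighbors_nonempty fun _ _ hAB hadj ↦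
    idealGraph_commonNeighbors_nonempty hmin hconn hAB hadj

lemma idealGraph_ediam_le_one_of_unique {M : Set S} (hM : IsMinimalLeftIdeal S M)
    (huniq : ∀ N, IsMinimalLeftIdeal S N → N = M) : (idealGraph S).ediam ≤ 1 := by
  have hsub (A : {I : Set S // IsNontrivialLeftIdeal S I}) : M ⊆ A.1 := by
    obtain ⟨N, hN, hNA⟩ := hM.exists_subset A.2
    exact huniq N hN ▸ hNA
  obtain ⟨m, hm⟩ := hM.1.1.1
  exact SimpleGraph.ediam_le_one_of_forall_adj fun A B hAB ↦ ⟨hAB, m, hsub A hm, hsub B hm⟩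

lemma idealGraph_edist_eq_two_of_minimal (hconn : (idealGraph S).Preconnected) {I J : Set S}
    (hI : IsMinimalLeftIdeal S I) (hJ : IsMinimalLeftIdeal S J) (hIJ : I ≠ J) :
    (idealGraph S).edist ⟨I, hI.1⟩ ⟨J, hJ.1⟩ = 2 := by
  have hne : (⟨I, hI.1⟩ : {I : Set S // IsNontrivialLeftIdeal S I}) ≠ ⟨J, hJ.1⟩ :=
    fun h ↦ hIJ (congrArg Subtype.val h)
  have hadj : ¬(idealGraph S).Adj ⟨I, hI.1⟩ ⟨J, hJ.1⟩ :=
    fun h ↦ hIJ (hI.eq_of_inter_nonempty hJ h.2)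
  exact SimpleGraph.edist_eq_two_iff.mpr
    ⟨hne, hadj, idealGraph_commonNeighbors_nonempty ⟨I, hI⟩ hconn hne hadj⟩

end Semigroup

/-- Let `S` have a minimal left ideal and suppose `Γ(S)` is connected. Then the
diameter of `Γ(S)` equals `2` iff `S` has at least two minimal left ideals. -/
theorem idealGraph_ediam_eq_two_iff (S : Type*) [Semigroup S]
    (hmin : ∃ I : Set S, IsMinimalLeftIdeal S I)
    (hconn : (idealGraph S).Connected) :
    (idealGraph S).ediam = 2 ↔
      ∃ I J : Set S, IsMinimalLeftIdeal S I ∧ IsMinimalLeftIdeal S J ∧ I ≠ J := by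
  constructor
  · intro hdiam
    by_contra! huniq
    obtain ⟨M, hM⟩ := hmin
    have hle := idealGraph_ediam_le_one_of_unique hM fun N hN ↦ huniq N M hN hM
    rw [hdiam] at hle
    exact absurd hle (by decide)
  · rintro ⟨I, J, hI, hJ, hIJ⟩
    refine le_antisymm (idealGraph_ediam_le_two hmin hconn.preconnected) ?_
    exact (idealGraph_edist_eq_two_of_minimal hconn.preconnected hI hJ hIJ).symm.le.trans
      SimpleGraph.edist_le_ediam
end

section
/- Let S be a semigroup that is the union of its n minimal left ideals I₁, …, Iₙ, where 2 ≤ n < ∞ (so S = I₁ ∪ ⋯ ∪ Iₙ and I₁, …, Iₙ are exactly the minimal left ideals of S). Then the clique number and the chromatic number of the intersection ideal graph Γ(S) both equal 2^{n−1} − 1. -/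
/-- The clique number of `Γ(S)`: the supremum of cardinalities of sets of pairwise
adjacent vertices. -/
noncomputable def cliqueNumber (S : Type*) [Semigroup S] : ℕ∞ :=
  sSup {k : ℕ∞ | ∃ C : Set {I : Set S // IsNontrivialLeftIdeal S I},
    (idealGraph S).IsClique C ∧ C.encard = k}

/-!
Every nontrivial left ideal `J` is the union of the minimal left ideals it contains, and distinct
minimal left ideals are disjoint, so `J ↦ {I minimal | I ⊆ J}` is an isomorphism from `Γ(S)` onto
the intersection graph of the nonempty proper subsets of an `n`-set `M`. Fix `a₀ ∈ M`. The
`2^(n-1) - 1` proper subsets containing `a₀` form a clique, and colouring a subset by whichever of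
it and its complement contains `a₀` is a proper colouring with that many colours; hence both the
clique number and the chromatic number equal `2^(n-1) - 1`.
-/

open Set

namespace SimpleGraph

variable {V α : Type*} {G : SimpleGraph V}

theorem IsClique.encard_le_of_coloring {s : Set V} (hs : G.IsClique s) (C : G.Coloring α) :
    s.encard ≤ ENat.card α := by
  have hinj : InjOn C s := fun _ hx _ hy hxy => by_contra fun hne => C.valid (hs hx hy hne) hxy
  rw [← hinj.encard_image]
  exact encard_le_card

theorem isClique_range_of_pairwise_adj {f : α → V} (hf : Pairwise fun i j => G.Adj (f i) (f j)) :
    G.IsClique (range f) := by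
  rintro _ ⟨i, rfl⟩ _ ⟨j, rfl⟩ hne
  exact hf fun hij => hne (congrArg f hij)

theorem encard_range_of_pairwise_adj {f : α → V} (hf : Pairwise fun i j => G.Adj (f i) (f j)) :
    (range f).encard = ENat.card α := by
  have hinj : f.Injective := Function.injective_iff_pairwise_ne.2 (hf.mono fun _ _ => G.ne_of_adj)
  rw [← image_univ, hinj.encard_image, encard_univ]

theorem sSup_encard_isClique_eq_of_pairwise_adj (C : G.Coloring α) {f : α → V}
    (hf : Pairwise fun i j => G.Adj (f i) (f j)) :
    sSup {k : ℕ∞ | ∃ s : Set V, G.IsClique s ∧ s.encard = k} = ENat.card α :=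
  le_antisymm (sSup_le fun _ ⟨_, hs, hk⟩ => hk ▸ hs.encard_le_of_coloring C)
    (le_sSup ⟨range f, isClique_range_of_pairwise_adj hf, encard_range_of_pairwise_adj hf⟩)

theorem chromaticNumber_eq_of_pairwise_adj [Finite α] (C : G.Coloring α) {f : α → V}
    (hf : Pairwise fun i j => G.Adj (f i) (f j)) : G.chromaticNumber = ENat.card α := by
  have := Fintype.ofFinite α
  rw [ENat.card_eq_coe_natCard]
  refine le_antisymm ?_ (le_chromaticNumber_of_pairwise_adj le_rfl f hf)
  rw [Nat.card_eq_fintype_card]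
  exact C.colorable.chromaticNumber_le

end SimpleGraph

def intersectionGraph (α : Type*) : SimpleGraph {T : Set α // T.Nonempty ∧ T ≠ univ} where
  Adj T U := T ≠ U ∧ (T.1 ∩ U.1).Nonempty
  symm := ⟨fun T U ⟨hne, hTU⟩ => ⟨hne.symm, inter_comm T.1 U.1 ▸ hTU⟩⟩
  loopless := ⟨fun _ h => h.1 rfl⟩

namespace intersectionGraph

variable {α : Type*} (a₀ : α)

/-- A proper nonempty subset is coloured by whichever of itself and its complement contains `a₀`,
with `a₀` removed: equal colours force two subsets to be equal or complementary. -/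
def coloring : (intersectionGraph α).Coloring {U : Set {b // b ≠ a₀} // U ≠ univ} :=
  SimpleGraph.Coloring.mk
    (fun T => ⟨{b | b.1 ∈ T.1 ↔ a₀ ∈ T.1}, by
      obtain ⟨⟨x, hx⟩, hT⟩ := T.2
      obtain ⟨y, hy⟩ := (ne_univ_iff_exists_notMem _).1 hT
      by_cases h : a₀ ∈ T.1
      · refine (ne_univ_iff_exists_notMem _).2 ⟨⟨y, ?_⟩, ?_⟩ <;> grind
      · refine (ne_univ_iff_exists_notMem _).2 ⟨⟨x, ?_⟩, ?_⟩ <;> grind⟩)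
    (by
      rintro T U ⟨hne, x, hxT, hxU⟩ hTU
      have key : ∀ b : α, b ≠ a₀ → ((b ∈ T.1 ↔ a₀ ∈ T.1) ↔ (b ∈ U.1 ↔ a₀ ∈ U.1)) :=
        fun b hb => Set.ext_iff.1 (congrArg Subtype.val hTU) ⟨b, hb⟩
      by_cases h : a₀ ∈ T.1 ↔ a₀ ∈ U.1
      · refine hne (Subtype.ext (Set.ext fun b => ?_))
        by_cases hb : b = a₀
        · exact hb ▸ h
        · have := key b hb; tauto
      · have hx : x ≠ a₀ := by rintro rfl; tauto
        have := key x hx; tauto)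

def cliqueFamily (U : {U : Set {b // b ≠ a₀} // U ≠ univ}) :
    {T : Set α // T.Nonempty ∧ T ≠ univ} :=
  ⟨insert a₀ (Subtype.val '' U.1), insert_nonempty _ _, by
    obtain ⟨b, hb⟩ := (ne_univ_iff_exists_notMem _).1 U.2
    refine (ne_univ_iff_exists_notMem _).2 ⟨b, ?_⟩
    rintro (h | ⟨c, hc, hcb⟩)
    · exact b.2 h
    · exact hb (Subtype.ext hcb ▸ hc)⟩

theorem pairwise_adj_cliqueFamily :
    Pairwise fun U V => (intersectionGraph α).Adj (cliqueFamily a₀ U) (cliqueFamily a₀ V) := by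
  intro U V hUV
  refine ⟨fun h => hUV (Subtype.ext (Set.ext fun b => ?_)), a₀, mem_insert _ _, mem_insert _ _⟩
  simpa [cliqueFamily, b.2] using Set.ext_iff.1 (congrArg Subtype.val h) b

theorem natCard_colors [Finite α] :
    Nat.card {U : Set {b // b ≠ a₀} // U ≠ univ} = 2 ^ (Nat.card α - 1) - 1 := by
  have := Fintype.ofFinite α
  classical
  simp [Nat.card_eq_fintype_card, Fintype.card_subtype_compl, Fintype.card_set]

end intersectionGraph

section Semigroup

variable {S : Type*} [Semigroup S]

theorem IsMinimalLeftIdeal.subset_of_inter_nonempty_s17 {I J : Set S} (hI : IsMinimalLeftIdeal S I)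
    (hJ : IsLeftIdeal S J) (h : (I ∩ J).Nonempty) : I ⊆ J := by
  have hIJ : IsLeftIdeal S (I ∩ J) := ⟨h, fun s x hx => ⟨hI.1.1.2 s x hx.1, hJ.2 s x hx.2⟩⟩
  by_contra hsub
  exact hI.2 _ hIJ ⟨inter_subset_left, fun hI' => hsub fun x hx => (hI' hx).2⟩

theorem IsMinimalLeftIdeal.eq_of_inter_nonempty_s17 {I J : Set S} (hI : IsMinimalLeftIdeal S I)
    (hJ : IsMinimalLeftIdeal S J) (h : (I ∩ J).Nonempty) : I = J :=
  (hI.subset_of_inter_nonempty_s17 hJ.1.1 h).antisymm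
    (hJ.subset_of_inter_nonempty_s17 hI.1.1 (inter_comm I J ▸ h))

def minimalLeftIdeals (S : Type*) [Semigroup S] : Set (Set S) := {I | IsMinimalLeftIdeal S I}

def minimalLeftIdealsBelow (J : Set S) : Set (minimalLeftIdeals S) := {I | (I : Set S) ⊆ J}

@[simp]
theorem mem_minimalLeftIdealsBelow {J : Set S} {I : minimalLeftIdeals S} :
    I ∈ minimalLeftIdealsBelow J ↔ (I : Set S) ⊆ J :=
  Iff.rfl

theorem exists_mem_minimalLeftIdeals (hunion : ⋃₀ minimalLeftIdeals S = univ) (x : S) :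
    ∃ I ∈ minimalLeftIdeals S, x ∈ I :=
  mem_sUnion.1 (hunion ▸ mem_univ x)

theorem minimalLeftIdealsBelow_biUnion (T : Set (minimalLeftIdeals S)) :
    minimalLeftIdealsBelow (⋃ I ∈ T, (I : Set S)) = T := by
  ext I
  refine ⟨fun hI => ?_, fun hI =>
    subset_biUnion_of_mem (u := fun I : minimalLeftIdeals S => (I : Set S)) hI⟩
  obtain ⟨x, hx⟩ := I.2.1.1.1
  obtain ⟨J, hJ, hxJ⟩ := mem_iUnion₂.1 (mem_minimalLeftIdealsBelow.1 hI hx)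
  rwa [Subtype.ext (I.2.eq_of_inter_nonempty_s17 J.2 ⟨x, hx, hxJ⟩)]

theorem IsLeftIdeal.biUnion_minimalLeftIdealsBelow
    (hunion : ⋃₀ minimalLeftIdeals S = univ) {J : Set S} (hJ : IsLeftIdeal S J) :
    ⋃ I ∈ minimalLeftIdealsBelow J, (I : Set S) = J := by
  refine (iUnion₂_subset fun I hI => mem_minimalLeftIdealsBelow.1 hI).antisymm fun x hx => ?_
  obtain ⟨I, hI, hxI⟩ := exists_mem_minimalLeftIdeals hunion x
  exact mem_biUnion (x := ⟨I, hI⟩) (hI.subset_of_inter_nonempty_s17 hJ ⟨x, hxI, hx⟩) hxI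

theorem isNontrivialLeftIdeal_biUnion {T : Set (minimalLeftIdeals S)} (hT : T.Nonempty)
    (hT' : T ≠ univ) : IsNontrivialLeftIdeal S (⋃ I ∈ T, (I : Set S)) := by
  refine ⟨⟨?_, fun s x hx => ?_⟩, fun h => hT' ?_⟩
  · obtain ⟨I, hI⟩ := hT
    obtain ⟨x, hx⟩ := I.2.1.1.1
    exact ⟨x, mem_biUnion hI hx⟩
  · obtain ⟨I, hI, hxI⟩ := mem_iUnion₂.1 hx
    exact mem_biUnion hI (I.2.1.1.2 s x hxI)
  · rw [← minimalLeftIdealsBelow_biUnion T, h]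
    exact eq_univ_of_forall fun I => subset_univ (I : Set S)

theorem IsLeftIdeal.minimalLeftIdealsBelow_nonempty (hunion : ⋃₀ minimalLeftIdeals S = univ)
    {J : Set S} (hJ : IsLeftIdeal S J) : (minimalLeftIdealsBelow J).Nonempty := by
  obtain ⟨x, hx⟩ := hJ.1
  rw [← hJ.biUnion_minimalLeftIdealsBelow hunion] at hx
  obtain ⟨I, hI, -⟩ := mem_iUnion₂.1 hx
  exact ⟨I, hI⟩

theorem IsNontrivialLeftIdeal.minimalLeftIdealsBelow_ne_univ
    (hunion : ⋃₀ minimalLeftIdeals S = univ) {J : Set S} (hJ : IsNontrivialLeftIdeal S J) :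
    minimalLeftIdealsBelow J ≠ univ := by
  intro h
  apply hJ.2
  rw [← hJ.1.biUnion_minimalLeftIdealsBelow hunion, h, biUnion_univ, ← sUnion_eq_iUnion, hunion]

theorem inter_minimalLeftIdealsBelow_nonempty_iff (hunion : ⋃₀ minimalLeftIdeals S = univ)
    {J₁ J₂ : Set S} (hJ₁ : IsLeftIdeal S J₁) (hJ₂ : IsLeftIdeal S J₂) :
    (minimalLeftIdealsBelow J₁ ∩ minimalLeftIdealsBelow J₂).Nonempty ↔ (J₁ ∩ J₂).Nonempty := by
  constructor
  · rintro ⟨I, hI₁, hI₂⟩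
    obtain ⟨x, hx⟩ := I.2.1.1.1
    exact ⟨x, hI₁ hx, hI₂ hx⟩
  · rintro ⟨x, hx₁, hx₂⟩
    obtain ⟨I, hI, hxI⟩ := exists_mem_minimalLeftIdeals hunion x
    exact ⟨⟨I, hI⟩, hI.subset_of_inter_nonempty_s17 hJ₁ ⟨x, hxI, hx₁⟩,
      hI.subset_of_inter_nonempty_s17 hJ₂ ⟨x, hxI, hx₂⟩⟩

def idealGraphIsoIntersectionGraph (hunion : ⋃₀ minimalLeftIdeals S = univ) :
    idealGraph S ≃g intersectionGraph (minimalLeftIdeals S) :=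
  let e : {J : Set S // IsNontrivialLeftIdeal S J} ≃
      {T : Set (minimalLeftIdeals S) // T.Nonempty ∧ T ≠ univ} :=
    { toFun J := ⟨minimalLeftIdealsBelow J.1, J.2.1.minimalLeftIdealsBelow_nonempty hunion,
        J.2.minimalLeftIdealsBelow_ne_univ hunion⟩
      invFun T := ⟨⋃ I ∈ T.1, (I : Set S), isNontrivialLeftIdeal_biUnion T.2.1 T.2.2⟩
      left_inv J := Subtype.ext (J.2.1.biUnion_minimalLeftIdealsBelow hunion)
      right_inv T := Subtype.ext (minimalLeftIdealsBelow_biUnion T.1) }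
  { e with
    map_rel_iff' := fun {J₁ J₂} =>
      and_congr e.injective.ne_iff
        (inter_minimalLeftIdealsBelow_nonempty_iff hunion J₁.2.1 J₂.2.1) }

end Semigroup

/-- If `S` is the union of its `n` minimal left ideals (`2 ≤ n < ∞`), then the clique
number and chromatic number of `Γ(S)` both equal `2^(n-1) - 1`. -/
theorem cliqueNumber_chromaticNumber_eq (S : Type*) [Semigroup S] (n : ℕ) (hn : 2 ≤ n)
    (hcard : {I : Set S | IsMinimalLeftIdeal S I}.encard = n)
    (hunion : ⋃₀ {I : Set S | IsMinimalLeftIdeal S I} = Set.univ) :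
    cliqueNumber S = (2 ^ (n - 1) - 1 : ℕ) ∧
      (idealGraph S).chromaticNumber = (2 ^ (n - 1) - 1 : ℕ) := by
  have : Finite (minimalLeftIdeals S) := (finite_of_encard_eq_coe hcard).to_subtype
  have hM : Nat.card (minimalLeftIdeals S) = n := by
    rw [Nat.card_coe_set_eq, ncard_def, minimalLeftIdeals, hcard, ENat.toNat_natCast]
  obtain ⟨a₀⟩ : Nonempty (minimalLeftIdeals S) := (Nat.card_pos_iff.1 (by omega)).1
  let e := idealGraphIsoIntersectionGraph hunion
  have hf : Pairwise fun U V => (idealGraph S).Adj (e.symm (intersectionGraph.cliqueFamily a₀ U))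
      (e.symm (intersectionGraph.cliqueFamily a₀ V)) :=
    fun U V hUV => e.symm.map_adj_iff.2 (intersectionGraph.pairwise_adj_cliqueFamily a₀ hUV)
  let C := (intersectionGraph.coloring a₀).comp e.toHom
  rw [← hM, ← intersectionGraph.natCard_colors a₀, ← ENat.card_eq_coe_natCard]
  exact ⟨SimpleGraph.sSup_encard_isClique_eq_of_pairwise_adj C hf,
    SimpleGraph.chromaticNumber_eq_of_pairwise_adj C hf⟩
end
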